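/- Let p be a prime. In the polynomial ring A = ℚ[x_1, x_2, x_3, …] (a polynomial variable x_n for each integer n ≥ 1), form the power series X(t) = 1 + Σ_{n≥1} x_n t^n ∈ A[[t]]. Let C ∈ A[[t]] be the unique power series with zero constant term such that X = exp(C) (it exists since X has constant term 1), and set c_n = n·(coefficient of t^n in C) for n ≥ 1. Let U and V be the p-singular and p-regular parts of X, and Y(t) = V(t)·U(t)^{-1} = Σ_{n≥0} y_n t^n. Then the ℚ-subalgebra of A generated by {y_n : n ≥ 1, p ∤ n} equals the ℚ-subalgebra of A generated by {c_n : n ≥ 1, p ∤ n}. -/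

import Mathlib

/-!
Write `C = F + G` with `F`, `G` the `p`-regular and `p`-singular parts of `C`. Then
`X = exp F · exp G`, and since the unit `exp G` is `p`-singular, multiplying by it commutes with
taking `p`-regular and `p`-singular parts; cancelling it gives `Y · sing (exp F) = reg (exp F)`.
As `cₙ = n fₙ` for `p ∤ n`, both algebras are compared with the one generated by the
coefficients `fₙ` of `F`. One inclusion holds because `sing (exp F)` is invertible with constant
term `1`. For the other, when `p ∤ n` the coefficient `eₙ` of `exp F` is `fₙ` plus a polynomial
in `f₁, …, fₙ₋₁`, while `eₙ = Σ yₐ e_b` over `a + b = n` with `p ∣ b < n`; so induction on `n`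
puts `fₙ` in the algebra generated by the `yₐ` with `p ∤ a`.
-/

open PowerSeries

noncomputable def pSingularPart {R : Type*} [CommRing R] (p : ℕ) (F : PowerSeries R) :
    PowerSeries R :=
  PowerSeries.mk fun n => if p ∣ n then PowerSeries.coeff (R := R) n F else 0

noncomputable def pRegularPart {R : Type*} [CommRing R] (p : ℕ) (F : PowerSeries R) :
    PowerSeries R :=
  PowerSeries.mk fun n => if p ∣ n then 0 else PowerSeries.coeff (R := R) n F

/-- When the constant term of `C` is zero, `coeff n (C ^ k) = 0` for `k > n`, so the truncated
sum computes the full exponential `Σ_{k≥0} Cᵏ/k!`. -/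
noncomputable def psExp {R : Type*} [CommRing R] [Algebra ℚ R] (C : PowerSeries R) :
    PowerSeries R :=
  PowerSeries.mk fun n => ∑ k ∈ Finset.range (n + 1),
    ((k.factorial : ℚ)⁻¹) • PowerSeries.coeff (R := R) n (C ^ k)

open Finset

namespace PowerSeries

theorem coeff_pow_eq_zero_of_lt {R : Type*} [CommSemiring R] {C : R⟦X⟧}
    (hC : constantCoeff C = 0) {n k : ℕ} (h : n < k) : coeff n (C ^ k) = 0 :=
  coeff_of_lt_order n <|
    (ENat.natCast_lt_natCast.2 h).trans_le (le_order_pow_of_constantCoeff_eq_zero k hC)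

theorem eq_of_derivative_eq_mul {R : Type*} [CommRing R] [IsAddTorsionFree R] {F G D : R⟦X⟧}
    (hF : d⁄dX R F = F * D) (hG : d⁄dX R G = G * D) (h0 : constantCoeff F = constantCoeff G) :
    F = G := by
  ext n
  induction n using Nat.strong_induction_on with
  | _ n IH =>
  cases n with
  | zero => simpa using h0
  | succ n =>
    have hFn := congrArg (coeff n) hF
    have hGn := congrArg (coeff n) hG
    rw [coeff_derivative, coeff_mul] at hFn hGn
    have h : coeff (n + 1) F * (n + 1) = coeff (n + 1) G * (n + 1) := by
      rw [hFn, hGn]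
      refine sum_congr rfl fun ab hab => ?_
      rw [IH ab.1 (Nat.lt_succ_of_le (Finset.HasAntidiagonal.antidiagonal.fst_le hab))]
    rw [← Nat.cast_succ, mul_comm, ← nsmul_eq_mul, mul_comm, ← nsmul_eq_mul] at h
    exact (smul_right_inj n.succ_ne_zero).1 h

section CoeffsIn

variable {R A : Type*} [CommRing R] [CommRing A] [Algebra R A]

def coeffsIn (B : Subalgebra R A) : Subalgebra R A⟦X⟧ where
  carrier := {F | ∀ n, coeff n F ∈ B}
  mul_mem' {F G} hF hG n := by
    rw [coeff_mul]
    exact sum_mem fun ab _ => mul_mem (hF ab.1) (hG ab.2)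
  add_mem' hF hG n := by
    rw [map_add]
    exact add_mem (hF n) (hG n)
  algebraMap_mem' r n := by
    rw [algebraMap_apply, coeff_C]
    split_ifs
    · exact B.algebraMap_mem r
    · exact zero_mem B

variable {B : Subalgebra R A}

theorem mem_coeffsIn {F : A⟦X⟧} : F ∈ coeffsIn B ↔ ∀ n, coeff n F ∈ B := Iff.rfl

theorem coe_trunc_mem_coeffsIn {F : A⟦X⟧} {n : ℕ} (hF : ∀ m < n, coeff m F ∈ B) :
    (trunc n F : A⟦X⟧) ∈ coeffsIn B := fun m => by
  rw [Polynomial.coeff_coe, coeff_trunc]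
  split_ifs with hm
  · exact hF m hm
  · exact zero_mem B

theorem coeff_pow_mem_of_lt {F : A⟦X⟧} {n : ℕ} (hF : ∀ m < n, coeff m F ∈ B) (k : ℕ) {m : ℕ}
    (hm : m < n) : coeff m (F ^ k) ∈ B := by
  rw [← coeff_coe_trunc_of_lt hm, ← trunc_trunc_pow, coeff_coe_trunc_of_lt hm]
  exact pow_mem (coe_trunc_mem_coeffsIn hF) k m

theorem coeff_mul_mem_of_lt {F G : A⟦X⟧} (hF0 : constantCoeff F = 0)
    (hG0 : constantCoeff G = 0) {n : ℕ} (hF : ∀ m < n, coeff m F ∈ B)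
    (hG : ∀ m < n, coeff m G ∈ B) : coeff n (F * G) ∈ B := by
  rw [coeff_mul]
  refine sum_mem fun ⟨a, b⟩ hab => ?_
  rw [HasAntidiagonal.mem_antidiagonal] at hab
  dsimp only at hab ⊢
  obtain rfl | ha := eq_or_ne a 0
  · rw [coeff_zero_eq_constantCoeff_apply, hF0, zero_mul]
    exact zero_mem B
  obtain rfl | hb := eq_or_ne b 0
  · rw [coeff_zero_eq_constantCoeff_apply, hG0, mul_zero]
    exact zero_mem B
  exact mul_mem (hF a (by omega)) (hG b (by omega))

theorem mem_coeffsIn_of_mul_eq {G S H : A⟦X⟧} (hS : S ∈ coeffsIn B)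
    (hS0 : constantCoeff S = 1) (hH : H ∈ coeffsIn B) (h : G * S = H) :
    G ∈ coeffsIn B := by
  -- `S` lifts to a series over `B` with constant term `1`, whose inverse maps back to `S⁻¹`.
  let SB : B⟦X⟧ := mk fun n => ⟨coeff n S, hS n⟩
  have hSB : map B.val.toRingHom SB = S := by
    ext n
    simp [SB]
  have hSB0 : constantCoeff SB = ↑(1 : Bˣ) := by
    ext
    simp [SB, ← coeff_zero_eq_constantCoeff_apply, hS0]
  have hinv : S * map B.val.toRingHom (invOfUnit SB 1) = 1 := by
    rw [← hSB, ← map_mul, mul_invOfUnit SB 1 hSB0, map_one]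
  rw [← mul_one G, ← hinv, ← mul_assoc, h]
  exact mul_mem hH fun n => by simp [coeff_map]

end CoeffsIn

end PowerSeries

section Parts

variable {R : Type*} [CommRing R] (p : ℕ)

@[simp]
theorem coeff_pSingularPart (n : ℕ) (F : R⟦X⟧) :
    coeff n (pSingularPart p F) = if p ∣ n then coeff n F else 0 :=
  coeff_mk _ _

@[simp]
theorem coeff_pRegularPart (n : ℕ) (F : R⟦X⟧) :
    coeff n (pRegularPart p F) = if p ∣ n then 0 else coeff n F :=
  coeff_mk _ _

@[simp]
theorem constantCoeff_pSingularPart (F : R⟦X⟧) :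
    constantCoeff (pSingularPart p F) = constantCoeff F := by
  rw [← coeff_zero_eq_constantCoeff_apply, coeff_pSingularPart, if_pos (dvd_zero p),
    coeff_zero_eq_constantCoeff_apply]

@[simp]
theorem constantCoeff_pRegularPart (F : R⟦X⟧) : constantCoeff (pRegularPart p F) = 0 := by
  rw [← coeff_zero_eq_constantCoeff_apply, coeff_pRegularPart, if_pos (dvd_zero p)]

theorem pRegularPart_eq_sub (F : R⟦X⟧) : pRegularPart p F = F - pSingularPart p F := by
  ext n
  by_cases h : p ∣ n <;> simp [h]

def pSingularSubring : Subring R⟦X⟧ where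
  carrier := {S | ∀ n, ¬ p ∣ n → coeff n S = 0}
  mul_mem' {S T} hS hT n hn := by
    rw [coeff_mul]
    refine sum_eq_zero fun ⟨a, b⟩ hab => ?_
    rw [HasAntidiagonal.mem_antidiagonal] at hab
    dsimp only at hab ⊢
    by_cases ha : p ∣ a
    · rw [hT b fun hb => hn (hab ▸ dvd_add ha hb), mul_zero]
    · rw [hS a ha, zero_mul]
  one_mem' n hn := by
    rw [coeff_one, if_neg]
    rintro rfl
    exact hn (dvd_zero p)
  add_mem' hS hT n hn := by rw [map_add, hS n hn, hT n hn, add_zero]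
  zero_mem' n _ := map_zero _
  neg_mem' hS n hn := by rw [map_neg, hS n hn, neg_zero]

variable {p}

theorem mem_pSingularSubring {S : R⟦X⟧} :
    S ∈ pSingularSubring p ↔ ∀ n, ¬ p ∣ n → coeff n S = 0 := Iff.rfl

theorem pSingularPart_mul_of_mem {S : R⟦X⟧} (hS : S ∈ pSingularSubring p) (F : R⟦X⟧) :
    pSingularPart p (F * S) = pSingularPart p F * S := by
  ext n
  rw [coeff_pSingularPart, coeff_mul, coeff_mul, ← sum_const_zero, ← sum_ite_irrel]
  refine sum_congr rfl fun ⟨a, b⟩ hab => ?_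
  rw [HasAntidiagonal.mem_antidiagonal] at hab
  subst hab
  by_cases hb : p ∣ b
  · simp [Nat.dvd_add_left hb]
  · simp [hS b hb]

theorem pRegularPart_mul_of_mem {S : R⟦X⟧} (hS : S ∈ pSingularSubring p) (F : R⟦X⟧) :
    pRegularPart p (F * S) = pRegularPart p F * S := by
  rw [pRegularPart_eq_sub, pRegularPart_eq_sub, pSingularPart_mul_of_mem hS, sub_mul]

theorem pSingularPart_mem_coeffsIn {S : Type*} [CommRing S] [Algebra S R]
    {B : Subalgebra S R} {F : R⟦X⟧} (hF : F ∈ coeffsIn B) :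
    pSingularPart p F ∈ coeffsIn B := fun n => by
  rw [coeff_pSingularPart]
  split_ifs
  · exact hF n
  · exact zero_mem B

theorem pRegularPart_mem_coeffsIn {S : Type*} [CommRing S] [Algebra S R]
    {B : Subalgebra S R} {F : R⟦X⟧} (hF : F ∈ coeffsIn B) :
    pRegularPart p F ∈ coeffsIn B := fun n => by
  rw [coeff_pRegularPart]
  split_ifs
  · exact zero_mem B
  · exact hF n

end Parts

section Exp

variable {R : Type*} [CommRing R] [Algebra ℚ R]

theorem coeff_psExp (n : ℕ) (C : R⟦X⟧) :
    coeff n (psExp C) = ∑ k ∈ range (n + 1), ((k.factorial : ℚ)⁻¹) • coeff n (C ^ k) :=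
  coeff_mk _ _

@[simp]
theorem constantCoeff_psExp (C : R⟦X⟧) : constantCoeff (psExp C) = 1 := by
  rw [← coeff_zero_eq_constantCoeff_apply, coeff_psExp]
  simp

theorem psExp_eq_subst_exp {C : R⟦X⟧} (hC : constantCoeff C = 0) :
    psExp C = (exp R).subst C := by
  ext n
  rw [coeff_psExp, coeff_subst' (HasSubst.of_constantCoeff_zero' hC),
    finsum_eq_sum_of_support_subset (s := range (n + 1))]
  · refine sum_congr rfl fun k _ => ?_
    rw [coeff_exp, smul_eq_mul, ← Algebra.smul_def, one_div]
  · intro k hk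
    rw [Function.mem_support] at hk
    rw [coe_range, Set.mem_Iio, Nat.lt_succ_iff]
    by_contra hnk
    exact hk (by rw [coeff_pow_eq_zero_of_lt hC (not_le.1 hnk), smul_zero])

theorem derivative_psExp {C : R⟦X⟧} (hC : constantCoeff C = 0) :
    d⁄dX R (psExp C) = psExp C * d⁄dX R C := by
  rw [psExp_eq_subst_exp hC, derivative_subst (HasSubst.of_constantCoeff_zero' hC), derivative_exp]

/-- Both sides solve `f' = f · (A + B)'` with `f(0) = 1`. -/
theorem psExp_add {A B : R⟦X⟧} (hA : constantCoeff A = 0) (hB : constantCoeff B = 0) :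
    psExp (A + B) = psExp A * psExp B := by
  have := IsAddTorsionFree.of_module_rat R
  refine eq_of_derivative_eq_mul (derivative_psExp (by simp [hA, hB])) ?_ (by simp)
  rw [Derivation.leibniz, derivative_psExp hA, derivative_psExp hB, map_add, smul_eq_mul,
    smul_eq_mul]
  ring

end Exp

section ExpCoeffs

variable {R : Type*} [CommRing R] [Algebra ℚ R]

theorem psExp_mem_pSingularSubring {p : ℕ} {G : R⟦X⟧} (hG : G ∈ pSingularSubring p) :
    psExp G ∈ pSingularSubring p := fun n hn => by
  rw [coeff_psExp]
  exact sum_eq_zero fun k _ => by rw [mem_pSingularSubring.1 (pow_mem hG k) n hn, smul_zero]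

variable {B : Subalgebra ℚ R}

theorem psExp_mem_coeffsIn {F : R⟦X⟧} (hF : F ∈ coeffsIn B) :
    psExp F ∈ coeffsIn B := fun n => by
  rw [coeff_psExp]
  exact sum_mem fun k _ => B.smul_mem (mem_coeffsIn.1 (pow_mem hF k) n) _

theorem coeff_psExp_sub_coeff_mem {F : R⟦X⟧} (hF0 : constantCoeff F = 0) {n : ℕ}
    (hF : ∀ m < n, coeff m F ∈ B) : coeff n (psExp F) - coeff n F ∈ B := by
  cases n with
  | zero => simp [hF0, one_mem]
  | succ n =>
    rw [coeff_psExp, sum_range_succ', sum_range_succ']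
    simp only [zero_add, pow_zero, pow_one, coeff_one, if_neg n.succ_ne_zero, smul_zero, add_zero,
      Nat.factorial_one, Nat.cast_one, inv_one, one_smul, add_sub_cancel_right]
    refine sum_mem fun k _ => B.smul_mem ?_ _
    rw [pow_succ]
    exact coeff_mul_mem_of_lt (by simp [hF0]) hF0 (fun m hm => coeff_pow_mem_of_lt hF _ hm) hF

end ExpCoeffs

section RegularQuotient

variable {R : Type*} [CommRing R]

def IsPRegularQuotient (p : ℕ) (E Y : R⟦X⟧) : Prop :=
  Y * pSingularPart p E = pRegularPart p E

variable {p : ℕ} {E Y : R⟦X⟧}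

theorem IsPRegularQuotient.of_mul {S : R⟦X⟧} (hS : S ∈ pSingularSubring p) (hSu : IsUnit S)
    (h : IsPRegularQuotient p (E * S) Y) : IsPRegularQuotient p E Y := by
  refine hSu.mul_right_cancel ?_
  rw [mul_assoc, ← pSingularPart_mul_of_mem hS, h, pRegularPart_mul_of_mem hS]

theorem IsPRegularQuotient.mem_coeffsIn {S : Type*} [CommRing S] [Algebra S R]
    {B : Subalgebra S R} (h : IsPRegularQuotient p E Y) (hE : E ∈ coeffsIn B)
    (hE0 : constantCoeff E = 1) : Y ∈ coeffsIn B :=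
  mem_coeffsIn_of_mul_eq (pSingularPart_mem_coeffsIn hE)
    (by rw [constantCoeff_pSingularPart, hE0]) (pRegularPart_mem_coeffsIn hE) h

theorem IsPRegularQuotient.mem_coeffsIn_of_psExp [Algebra ℚ R] {B : Subalgebra ℚ R}
    {F : R⟦X⟧} (h : IsPRegularQuotient p (psExp F) Y) (hF : ∀ n, p ∣ n → coeff n F = 0)
    (hY : ∀ n, ¬ p ∣ n → coeff n Y ∈ B) : F ∈ coeffsIn B := by
  have hF0 : constantCoeff F = 0 := by
    rw [← coeff_zero_eq_constantCoeff_apply, hF 0 (dvd_zero p)]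
  intro n
  induction n using Nat.strong_induction_on with
  | _ n IH =>
  by_cases hpn : p ∣ n
  · rw [hF n hpn]
    exact zero_mem B
  have hE : ∀ b < n, coeff b (psExp F) ∈ B := fun b hb => by
    simpa using add_mem (coeff_psExp_sub_coeff_mem hF0 fun m hm => IH m (hm.trans hb)) (IH b hb)
  have hEn : coeff n (psExp F) ∈ B := by
    have hn := congrArg (coeff n) h
    rw [coeff_pRegularPart, if_neg hpn, coeff_mul] at hn
    rw [← hn]
    refine sum_mem fun ⟨a, b⟩ hab => ?_
    rw [HasAntidiagonal.mem_antidiagonal] at hab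
    dsimp only at hab ⊢
    rw [coeff_pSingularPart]
    split_ifs with hpb
    · have hpa : ¬ p ∣ a := fun hpa => hpn (hab ▸ dvd_add hpa hpb)
      have hbn : b < n := lt_of_le_of_ne (by omega) (by rintro rfl; exact hpn hpb)
      exact mul_mem (hY a hpa) (hE b hbn)
    · rw [mul_zero]
      exact zero_mem B
  simpa using sub_mem hEn (coeff_psExp_sub_coeff_mem hF0 IH)

end RegularQuotient

theorem stmt8_general (p : ℕ)
    (X C Y : PowerSeries (MvPolynomial ℕ+ ℚ))
    (hC0 : PowerSeries.constantCoeff (R := MvPolynomial ℕ+ ℚ) C = 0)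
    (hCX : psExp C = X)
    (hY : Y * pSingularPart p X = pRegularPart p X) :
    Algebra.adjoin ℚ
        {a : MvPolynomial ℕ+ ℚ | ∃ n : ℕ, 1 ≤ n ∧ ¬ p ∣ n ∧
          a = PowerSeries.coeff (R := MvPolynomial ℕ+ ℚ) n Y} =
      Algebra.adjoin ℚ
        {a : MvPolynomial ℕ+ ℚ | ∃ n : ℕ, 1 ≤ n ∧ ¬ p ∣ n ∧
          a = (n : MvPolynomial ℕ+ ℚ) * PowerSeries.coeff (R := MvPolynomial ℕ+ ℚ) n C} := by
  set F := pRegularPart p C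
  have hF : ∀ n, p ∣ n → coeff n F = 0 := fun n hn => by simp [F, hn]
  have hCF : ∀ n, ¬ p ∣ n → coeff n C = coeff n F := fun n hn => by simp [F, hn]
  have hpos : ∀ n, ¬ p ∣ n → 0 < n := fun n hn =>
    Nat.pos_of_ne_zero fun h => hn (h ▸ dvd_zero p)
  have hYF : IsPRegularQuotient p (psExp F) Y := by
    have hG : pSingularPart p C ∈ pSingularSubring p := fun n hn => by simp [hn]
    rw [← hCX, ← add_sub_cancel (pSingularPart p C) C, ← pRegularPart_eq_sub, add_comm,
      psExp_add (constantCoeff_pRegularPart p C) (by rw [constantCoeff_pSingularPart, hC0])] at hY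
    exact .of_mul (psExp_mem_pSingularSubring hG) (isUnit_iff_constantCoeff.2 (by simp)) hY
  apply le_antisymm <;> refine Algebra.adjoin_le ?_ <;> rintro _ ⟨n, -, hpn, rfl⟩
  · refine hYF.mem_coeffsIn (psExp_mem_coeffsIn fun m => ?_) (constantCoeff_psExp F) n
    by_cases hpm : p ∣ m
    · rw [hF m hpm]
      exact zero_mem _
    have hm : (m : ℚ) ≠ 0 := Nat.cast_ne_zero.2 (hpos m hpm).ne'
    rw [← hCF m hpm, ← inv_smul_smul₀ hm (coeff m C), Nat.cast_smul_eq_nsmul, nsmul_eq_mul]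
    refine Subalgebra.smul_mem _ (Algebra.subset_adjoin ?_) _
    exact ⟨m, hpos m hpm, hpm, rfl⟩
  · rw [hCF n hpn]
    refine mul_mem (Subalgebra.natCast_mem _ n) (hYF.mem_coeffsIn_of_psExp hF (fun m hpm => ?_) n)
    exact Algebra.subset_adjoin ⟨m, hpos m hpm, hpm, rfl⟩

/-- in `A = ℚ[x₁, x₂, …]` (variables indexed by `ℕ+`), let
`X(t) = 1 + Σ_{n≥1} xₙ tⁿ` and let `C` be the power series with zero constant term such
that `X = exp C`; set `cₙ = n · (coeff n C)`.  With `U`,`V` the `p`-singular/`p`-regular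
parts of `X` and `Y = V·U⁻¹ = Σ yₙ tⁿ`, the `ℚ`-subalgebra of `A` generated by
`{yₙ : n ≥ 1, p ∤ n}` equals the `ℚ`-subalgebra generated by `{cₙ : n ≥ 1, p ∤ n}`. -/
theorem stmt8 (p : ℕ) (hp : p.Prime)
    (X C Y : PowerSeries (MvPolynomial ℕ+ ℚ))
    (hX : X = PowerSeries.mk fun n =>
      if h : 0 < n then MvPolynomial.X (⟨n, h⟩ : ℕ+) else 1)
    (hC0 : PowerSeries.constantCoeff (R := MvPolynomial ℕ+ ℚ) C = 0)
    (hCX : psExp C = X)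
    (hY : Y * pSingularPart p X = pRegularPart p X) :
    Algebra.adjoin ℚ
        {a : MvPolynomial ℕ+ ℚ | ∃ n : ℕ, 1 ≤ n ∧ ¬ p ∣ n ∧
          a = PowerSeries.coeff (R := MvPolynomial ℕ+ ℚ) n Y} =
      Algebra.adjoin ℚ
        {a : MvPolynomial ℕ+ ℚ | ∃ n : ℕ, 1 ≤ n ∧ ¬ p ∣ n ∧
          a = (n : MvPolynomial ℕ+ ℚ) * PowerSeries.coeff (R := MvPolynomial ℕ+ ℚ) n C} :=
  stmt8_general p X C Y hC0 hCX hY
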